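/- Let R → S be a faithfully flat finite ring map of commutative Noetherian rings. Then the map R → S is a split injection of R-modules; more generally, for every R-module M the natural map M → M ⊗_R S is a split monomorphism of R-modules. -/

import Mathlib

/-!
Splitting `R → S` amounts to finding an `R`-linear `r : S → R` with `r 1 = 1`. Since `S` is
finitely presented, `Hom_R(S, R)` commutes with localization, so it suffices to find such `r`
over each `R_𝔪`. There `S_𝔪` is finite flat, hence free, and `k ⊗ R_𝔪 → k ⊗ S_𝔪` is injective
because `k ⊗ S_𝔪 ≠ 0` by faithful flatness; over a local ring a map into a finite free module
that stays injective modulo the maximal ideal splits. Tensoring `r` with `M` splits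
`M → M ⊗ S`.
-/

universe u v

open scoped TensorProduct

theorem lTensor_algebraLinearMap_injective {R A : Type*} (K : Type*) [CommRing R] [CommRing A]
    [Algebra R A] [Field K] [Algebra R K] [Nontrivial (K ⊗[R] A)] :
    Function.Injective ((Algebra.linearMap R A).lTensor K) := by
  have h : (Algebra.linearMap R A).lTensor K =
      (Algebra.TensorProduct.includeLeft : K →ₐ[R] K ⊗[R] A).toLinearMap ∘ₗ
        (TensorProduct.rid R K).toLinearMap := by
    ext; simp
  rw [h]
  exact (Algebra.TensorProduct.includeLeft : K →ₐ[R] K ⊗[R] A).toRingHom.injective.comp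
    (TensorProduct.rid R K).injective

theorem Module.exists_apply_eq_one_of_localization_maximal {R M : Type*} [CommRing R]
    [AddCommGroup M] [Module R M] [Module.FinitePresentation R M] (m : M)
    (H : ∀ (P : Ideal R) [P.IsMaximal],
      ∃ f : Localization.AtPrime P ⊗[R] M →ₗ[Localization.AtPrime P] Localization.AtPrime P,
        f (1 ⊗ₜ m) = 1) :
    ∃ f : M →ₗ[R] R, f m = 1 := by
  suffices (1 : R) ∈ LinearMap.range (LinearMap.applyₗ (R := R) (M₂ := R) m) by
    simpa using this
  refine Submodule.mem_of_localization_maximal (fun P _ ↦ Localization.AtPrime P)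
    (fun P _ ↦ Algebra.linearMap R _) _ _ fun P _ ↦ ?_
  obtain ⟨fₚ, hfₚ⟩ := H P
  -- `Hom` out of a finitely presented module localizes, so `fₚ` is a fraction `f / s`.
  obtain ⟨⟨f, s⟩, hf⟩ := IsLocalizedModule.surj P.primeCompl
    (IsLocalizedModule.mapExtendScalars P.primeCompl (TensorProduct.mk R _ M 1)
      (Algebra.linearMap R (Localization.AtPrime P)) (Localization.AtPrime P)) fₚ
  have hfm : algebraMap R (Localization.AtPrime P) (f m) = algebraMap R _ s := by
    have := LinearMap.congr_fun hf (TensorProduct.mk R _ M 1 m)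
    rw [IsLocalizedModule.mapExtendScalars_apply_apply, IsLocalizedModule.map_apply,
      LinearMap.smul_apply, TensorProduct.mk_apply, hfₚ, Algebra.linearMap_apply] at this
    rw [← this, Submonoid.smul_def, Algebra.smul_def, mul_one]
  rw [Submodule.mem_localized₀]
  refine ⟨f m, ⟨f, rfl⟩, s, ?_⟩
  rw [IsLocalizedModule.mk'_eq_iff]
  simp [hfm, Submonoid.smul_def, Algebra.smul_def]

namespace Module.FaithfullyFlat

variable {R A : Type*} [CommRing R] [CommRing A] [Algebra R A] [Module.FaithfullyFlat R A]

theorem exists_retraction_of_isLocalRing [IsLocalRing R] [Module.Finite R A] :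
    ∃ r : A →ₗ[R] R, r ∘ₗ Algebra.linearMap R A = LinearMap.id :=
  have : Module.Free R A := Module.free_of_flat_of_isLocalRing
  (IsLocalRing.split_injective_iff_lTensor_residueField_injective _).mpr
    (lTensor_algebraLinearMap_injective _)

theorem exists_linearMap_apply_one_eq_one [Module.FinitePresentation R A] :
    ∃ r : A →ₗ[R] R, r 1 = 1 :=
  Module.exists_apply_eq_one_of_localization_maximal 1 fun P _ ↦ by
    obtain ⟨r, hr⟩ := exists_retraction_of_isLocalRing
      (R := Localization.AtPrime P) (A := Localization.AtPrime P ⊗[R] A)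
    exact ⟨r, by simpa [Algebra.TensorProduct.one_def] using LinearMap.congr_fun hr 1⟩

end Module.FaithfullyFlat

theorem stmt7_general (R S : Type u) [CommRing R] [CommRing S] [IsNoetherianRing R]
    [Algebra R S] [Module.Finite R S] [Module.FaithfullyFlat R S] :
    (∃ r : S →ₗ[R] R, r ∘ₗ Algebra.linearMap R S = LinearMap.id) ∧
    ∀ (M : Type v) [AddCommGroup M] [Module R M],
      ∃ r : (M ⊗[R] S) →ₗ[R] M,
        r ∘ₗ ((TensorProduct.mk R M S).flip (1 : S)) = LinearMap.id := by
  have : Module.FinitePresentation R S := Module.finitePresentation_of_finite R S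
  obtain ⟨r, hr⟩ := Module.FaithfullyFlat.exists_linearMap_apply_one_eq_one (R := R) (A := S)
  refine ⟨⟨r, LinearMap.ext_ring (by simpa using hr)⟩, fun M _ _ ↦ ?_⟩
  refine ⟨(TensorProduct.rid R M).toLinearMap ∘ₗ r.lTensor M, ?_⟩
  ext m
  simp [hr]

/-- For a faithfully flat finite map `R → S` of commutative Noetherian rings, `R → S`
is a split injection of `R`-modules, and more generally for every `R`-module `M` the
natural map `M → M ⊗[R] S`, `m ↦ m ⊗ 1`, is a split monomorphism of `R`-modules. -/
theorem stmt7 (R S : Type u) [CommRing R] [CommRing S] [IsNoetherianRing R]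
    [IsNoetherianRing S] [Algebra R S] [Module.Finite R S] [Module.FaithfullyFlat R S] :
    (∃ r : S →ₗ[R] R, r ∘ₗ Algebra.linearMap R S = LinearMap.id) ∧
    ∀ (M : Type v) [AddCommGroup M] [Module R M],
      ∃ r : (M ⊗[R] S) →ₗ[R] M,
        r ∘ₗ ((TensorProduct.mk R M S).flip (1 : S)) = LinearMap.id :=
  stmt7_general R S
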